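/- For a function f ∈ L²(ℝ) with distributional derivative in L², the operator 𝟙_{[1,∞)} ℱ f ℱ* 𝟙_{(−∞,0]} (where f acts by multiplication and ℱ is the Fourier transform) is Hilbert–Schmidt with ‖𝟙_{[1,∞)} ℱ f ℱ* 𝟙_{(−∞,0]}‖_{𝒥₂} ≤ C ‖f‖_{Ḣ^1} for an absolute constant C. -/

import Mathlib

open MeasureTheory
open scoped ENNReal NNReal

/-- Fourier transform with the paper's convention `f̂(ω) = (1/2π) ∫ e^{-iωx} f(x) dx`. -/
noncomputable def fhat (f : ℝ → ℂ) (ω : ℝ) : ℂ :=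
  (1 / (2 * Real.pi)) * ∫ x : ℝ, Complex.exp (-(Complex.I * (ω : ℂ) * (x : ℂ))) * f x

lemma fhat_eq_fourierIntegral (f : ℝ → ℂ) :
    fhat f = fun ω => (1 / (2 * Real.pi) : ℂ) *
      (FourierTransform.fourier f : ℝ → ℂ) (ω / (2 * Real.pi)) := by
  funext ω
  rw [fhat, Real.fourier_real_eq_integral_exp_smul]
  congr 1
  refine integral_congr_ae (Filter.Eventually.of_forall fun x => ?_)
  simp only [smul_eq_mul]
  have hr : (-2 * Real.pi * x * (ω / (2 * Real.pi)) : ℝ) = -(ω * x) := by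
    field_simp
  rw [hr]
  congr 1
  push_cast
  ring_nf

lemma continuous_fhat (f : ℝ → ℂ) (hf : Integrable f) : Continuous (fhat f) := by
  rw [fhat_eq_fourierIntegral]
  have h𝓕 : Continuous (FourierTransform.fourier f : ℝ → ℂ) :=
    VectorFourier.fourierIntegral_continuous (L := innerₗ ℝ) Real.continuous_fourierChar
      (by exact continuous_inner) hf
  exact continuous_const.mul (h𝓕.comp (continuous_id.div_const _))

/-- the operator `𝟙_{[1,∞)} ℱ f ℱ* 𝟙_{(-∞,0]}`, with kernel
`f̂(x - y)` for `x ≥ 1`, `y ≤ 0`, is Hilbert–Schmidt with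
`‖𝟙_{[1,∞)} ℱ f ℱ* 𝟙_{(-∞,0]}‖_{𝒥₂} ≤ C ‖f‖_{Ḣ^1}` for an absolute constant `C`. -/
theorem hankel_type_hs_bound :
    ∃ C : ℝ≥0, 0 < C ∧ ∀ f : ℝ → ℂ,
      MemLp f 2 (volume : Measure ℝ) → Integrable f →
      (∫⁻ x in Set.Ici (1 : ℝ), ∫⁻ y in Set.Iic (0 : ℝ),
          (‖fhat f (x - y)‖₊ : ℝ≥0∞) ^ 2) ≤
        (C : ℝ≥0∞) ^ 2 * ∫⁻ t : ℝ, (‖t‖₊ : ℝ≥0∞) ^ 2 * (‖fhat f t‖₊ : ℝ≥0∞) ^ 2 := by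
  refine ⟨1, one_pos, fun f _hf2 hf1 => ?_⟩
  set g : ℝ → ℝ≥0∞ := fun t => (‖fhat f t‖₊ : ℝ≥0∞) ^ 2 with hg
  have hgm : Measurable g :=
    ((continuous_fhat f hf1).measurable.nnnorm.coe_nnreal_ennreal).pow_const 2
  -- the kernel with indicator on the product space
  set s : Set (ℝ × ℝ) := {p : ℝ × ℝ | 1 ≤ p.1 ∧ p.1 ≤ p.2} with hs
  have hsm : MeasurableSet s :=
    (measurableSet_le measurable_const measurable_fst).inter
      (measurableSet_le measurable_fst measurable_snd)
  set F : ℝ → ℝ → ℝ≥0∞ := fun x t => s.indicator (fun p => g p.2) (x, t) with hF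
  have hFm : AEMeasurable (Function.uncurry F)
      ((volume : Measure ℝ).prod (volume : Measure ℝ)) := by
    have : Function.uncurry F = s.indicator (fun p => g p.2) := rfl
    rw [this]
    exact ((hgm.comp measurable_snd).indicator hsm).aemeasurable
  -- Step 1: substitution in the inner integral
  have step1 : ∀ x : ℝ, (∫⁻ y in Set.Iic (0 : ℝ), g (x - y)) = ∫⁻ t in Set.Ici x, g t := by
    intro x
    have hemb : MeasurableEmbedding (fun y : ℝ => x - y) :=
      (MeasurableEquiv.subLeft x).measurableEmbedding
    have hmp : MeasurePreserving (fun y : ℝ => x - y) volume volume :=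
      Measure.measurePreserving_sub_left volume x
    have hpre : (fun y : ℝ => x - y) ⁻¹' Set.Ici x = Set.Iic 0 := by
      ext y
      simp only [Set.mem_preimage, Set.mem_Ici, Set.mem_Iic]
      constructor <;> intro h <;> linarith
    calc (∫⁻ y in Set.Iic (0 : ℝ), g (x - y))
        = ∫⁻ y in (fun y : ℝ => x - y) ⁻¹' Set.Ici x, g ((fun y : ℝ => x - y) y) := by
          rw [hpre]
      _ = ∫⁻ t in Set.Ici x, g t :=
          hmp.setLIntegral_comp_preimage_emb hemb g (Set.Ici x)
  -- Step 2: rewrite as a double integral of an indicator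
  have step2 : (∫⁻ x in Set.Ici (1 : ℝ), ∫⁻ t in Set.Ici x, g t)
      = ∫⁻ x : ℝ, ∫⁻ t : ℝ, F x t := by
    rw [← lintegral_indicator measurableSet_Ici]
    refine lintegral_congr fun x => ?_
    by_cases hx : (1 : ℝ) ≤ x
    · rw [Set.indicator_of_mem (Set.mem_Ici.mpr hx)]
      rw [← lintegral_indicator measurableSet_Ici]
      refine lintegral_congr fun t => ?_
      by_cases ht : x ≤ t
      · rw [Set.indicator_of_mem (Set.mem_Ici.mpr ht), hF]
        exact (Set.indicator_of_mem (show (x, t) ∈ s from ⟨hx, ht⟩) (fun p => g p.2)).symm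
      · rw [Set.indicator_of_notMem (show t ∉ Set.Ici x from fun hc => ht hc) g, hF]
        exact (Set.indicator_of_notMem (show (x, t) ∉ s from fun hc => ht hc.2) (fun p => g p.2)).symm
    · rw [Set.indicator_of_notMem (show x ∉ Set.Ici (1:ℝ) from fun hc => hx hc)
        (fun x => ∫⁻ t in Set.Ici x, g t)]
      symm
      refine lintegral_eq_zero_iff ?_ |>.mpr ?_
      · exact (hgm.comp measurable_snd).indicator hsm |>.comp (measurable_prodMk_left)
          |>.comp measurable_id
      · refine Filter.Eventually.of_forall fun t => ?_
        exact Set.indicator_of_notMem (show (x, t) ∉ s from fun hc => hx hc.1) (fun p => g p.2)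
  -- Step 3: swap and compute the x-integral
  have step3 : (∫⁻ x : ℝ, ∫⁻ t : ℝ, F x t)
      = ∫⁻ t : ℝ, g t * volume (Set.Icc (1 : ℝ) t) := by
    rw [lintegral_lintegral_swap hFm]
    refine lintegral_congr fun t => ?_
    have : (fun x => F x t) = (Set.Icc (1 : ℝ) t).indicator (fun _ => g t) := by
      funext x
      by_cases hx : x ∈ Set.Icc (1 : ℝ) t
      · rw [Set.indicator_of_mem hx, hF]
        exact Set.indicator_of_mem (show (x, t) ∈ s from ⟨hx.1, hx.2⟩) (fun p => g p.2)
      · rw [Set.indicator_of_notMem (show x ∉ Set.Icc (1:ℝ) t from hx) (fun _ => g t), hF]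
        exact Set.indicator_of_notMem (show (x, t) ∉ s from fun hc => hx ⟨hc.1, hc.2⟩) (fun p => g p.2)
    rw [this, lintegral_indicator_const measurableSet_Icc]
  -- final bound
  have lhs_eq : (∫⁻ x in Set.Ici (1 : ℝ), ∫⁻ y in Set.Iic (0 : ℝ),
      (‖fhat f (x - y)‖₊ : ℝ≥0∞) ^ 2) = ∫⁻ t : ℝ, g t * volume (Set.Icc (1 : ℝ) t) := by
    calc (∫⁻ x in Set.Ici (1 : ℝ), ∫⁻ y in Set.Iic (0 : ℝ), (‖fhat f (x - y)‖₊ : ℝ≥0∞) ^ 2)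
        = ∫⁻ x in Set.Ici (1 : ℝ), ∫⁻ t in Set.Ici x, g t :=
          lintegral_congr fun x => step1 x
      _ = ∫⁻ x : ℝ, ∫⁻ t : ℝ, F x t := step2
      _ = ∫⁻ t : ℝ, g t * volume (Set.Icc (1 : ℝ) t) := step3
  rw [lhs_eq]
  have hC : ((1 : ℝ≥0) : ℝ≥0∞) ^ 2 = 1 := by norm_num
  rw [hC, one_mul]
  refine lintegral_mono fun t => ?_
  rw [mul_comm]
  refine mul_le_mul_left ?_ (g t)
  rw [Real.volume_Icc]
  have h1 : ((‖t‖₊ : ℝ≥0∞)) ^ 2 = ENNReal.ofReal (t ^ 2) := by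
    rw [← enorm_eq_nnnorm, Real.enorm_eq_ofReal_abs, ← ENNReal.ofReal_pow (abs_nonneg t), sq_abs]
  rw [h1]
  exact ENNReal.ofReal_le_ofReal (by nlinarith)
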